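/- arXiv:2506.19126 — 8 statements merged into one kernel-verified Lean document; each statement's English description precedes it below -/
import Mathlib

section
/- ℝ cannot be colored with two colors (red and blue) so that no two red points are at distance 1 and no two blue points are at distance 2. -/
/-!
If `y` is blue then `y + 2` is red, so `y + 3` is blue, so `y + 1` is red; but `y + 1` and
`y + 2` are red points at distance 1. Hence every point is red, which is absurd as well.
-/

section ForbiddenShifts

variable {G : Type*} [AddCommSemigroup G] {c : G → Bool} {a : G}

theorem eq_true_of_forbidden_shifts (hred : ∀ x, c x = true → c (x + a) = false)
    (hblue : ∀ x, c x = false → c (x + (a + a)) = true) (y : G) : c y = true := by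
  by_contra hy
  rw [Bool.not_eq_true] at hy
  have hy2 : c (y + (a + a)) = true := hblue y hy
  have hy3 : c (y + (a + a) + a) = false := hred _ hy2
  have hy1 : c (y + a) = true := by
    by_contra h
    rw [Bool.not_eq_true] at h
    have hy3' := hblue _ h
    rw [show y + a + (a + a) = y + (a + a) + a by ac_rfl, hy3] at hy3'
    exact Bool.noConfusion hy3'
  have hcontra := hred _ hy1
  rw [add_assoc, hy2] at hcontra
  exact Bool.noConfusion hcontra

theorem not_forbidden_shifts (hred : ∀ x, c x = true → c (x + a) = false)
    (hblue : ∀ x, c x = false → c (x + (a + a)) = true) (y : G) : False := by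
  have h := hred y (eq_true_of_forbidden_shifts hred hblue y)
  rw [eq_true_of_forbidden_shifts hred hblue] at h
  exact Bool.noConfusion h

end ForbiddenShifts

/-- ℝ cannot be 2-colored (red = true, blue = false) so that no two red points
are at distance 1 and no two blue points are at distance 2. -/
theorem no_red_blue_coloring_of_real :
    ¬ ∃ c : ℝ → Bool,
      (∀ x y : ℝ, c x = true → c y = true → |x - y| ≠ 1) ∧
      (∀ x y : ℝ, c x = false → c y = false → |x - y| ≠ 2) := by
  rintro ⟨c, hred, hblue⟩
  refine not_forbidden_shifts (c := c) (a := 1) (fun x hx => ?_) (fun x hx => ?_) 0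
  · by_contra h
    exact hred x (x + 1) hx (Bool.not_eq_false _ ▸ h) (by norm_num)
  · by_contra h
    exact hblue x (x + (1 + 1)) hx (Bool.not_eq_true _ ▸ h) (by norm_num)
end

section
/- For every 1×3 restriction array (d₁, d₂, d₃) of positive reals, there exists a coloring of ℝ with 3 colors such that no two points of color j are at distance dⱼ apart, for j = 1, 2, 3. -/
/-!
A `ℚ`-linear functional `f : ℝ → ℚ` vanishing at no `dⱼ` reduces the problem to the nonzero
rational distances `qⱼ = f dⱼ`. Write `‖·‖` for the distance to the nearest integer. If
`‖t q₀‖ + ‖t q₁‖ + ‖t q₂‖ ≥ 1` for some real `t`, cut `ℝ/ℤ` into consecutive arcs of lengths at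
most `‖t qⱼ‖` and give colour `j` to the `x` with `t f x` in the `j`-th arc: two points of one arc
differ by less than `‖t qⱼ‖` on the circle, hence not by `t qⱼ`.

Such a `t` comes from a 2-adic argument. After clearing denominators write `qⱼ = 2^βⱼ bⱼ` with
`bⱼ` odd and `h = β₀` maximal, and take `t = i / 2^(h+1)` with `i` odd. Then `t q₀ ≡ 1/2`, so
`‖t q₀‖ = 1/2`. If `βⱼ < h`, shifting `i` by the even number `2^(h-βⱼ)` moves `t qⱼ` by `1/2`, so
the values of `‖t qⱼ‖` before and after the shift sum to at least `1/2`; if `βⱼ = h`, then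
`‖t qⱼ‖ = 1/2` already. Hence at one of four odd values of `i`, `‖t q₁‖ + ‖t q₂‖ ≥ 1/2`.
-/

theorem Int.exists_eq_two_pow_mul_odd {n : ℤ} (hn : n ≠ 0) :
    ∃ (k : ℕ) (m : ℤ), Odd m ∧ n = 2 ^ k * m := by
  have hfin : FiniteMultiplicity (2 : ℤ) n := Int.finiteMultiplicity_iff.2 ⟨by decide, hn⟩
  obtain ⟨m, hm, hnot⟩ := hfin.exists_eq_pow_mul_and_not_dvd
  exact ⟨_, m, Int.not_even_iff_odd.1 (mt Even.two_dvd hnot), hm⟩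

section TwoPowerTorsion

variable {G : Type*}

theorem zsmul_eq_self_of_odd [AddGroup G] {e : G} (he : (2 : ℤ) • e = 0) {m : ℤ} (hm : Odd m) :
    m • e = e := by
  obtain ⟨k, rfl⟩ := hm
  rw [add_zsmul, mul_comm, mul_zsmul, he, zsmul_zero, zero_add, one_zsmul]

theorem odd_mul_two_pow_zsmul [AddGroup G] {ω : G} {h : ℕ} (hω : (2 ^ (h + 1) : ℤ) • ω = 0)
    {a : ℤ} (ha : Odd a) : (a * 2 ^ h) • ω = (2 ^ h : ℤ) • ω := by
  rw [mul_zsmul]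
  exact zsmul_eq_self_of_odd (by rwa [← mul_zsmul', ← pow_succ]) ha

variable [SeminormedAddGroup G] {ω : G} {h : ℕ}

theorem exists_even_shift_norm_le (hω : (2 ^ (h + 1) : ℤ) • ω = 0) {β : ℕ} (hβ : β ≤ h) {b : ℤ}
    (hb : Odd b) : ∃ s : ℤ, Even s ∧ ∀ i : ℤ, Odd i →
      ‖(2 ^ h : ℤ) • ω‖ ≤ ‖((i + s) * (2 ^ β * b)) • ω‖ + ‖(i * (2 ^ β * b)) • ω‖ := by
  obtain ⟨k, rfl⟩ := Nat.exists_eq_add_of_le hβ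
  rcases k with _ | k
  · refine ⟨0, Even.zero, fun i hi => ?_⟩
    rw [add_zero, add_zero, show i * (2 ^ β * b) = i * b * 2 ^ β by ring,
      odd_mul_two_pow_zsmul hω (hi.mul hb)]
    exact le_add_of_nonneg_left (norm_nonneg _)
  · refine ⟨2 ^ (k + 1), even_two.pow_of_ne_zero k.succ_ne_zero, fun i _ => ?_⟩
    have hshift : ((i + 2 ^ (k + 1)) * (2 ^ β * b)) • ω =
        (2 ^ (β + (k + 1)) : ℤ) • ω + (i * (2 ^ β * b)) • ω := by
      rw [← odd_mul_two_pow_zsmul hω hb, ← add_zsmul]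
      ring_nf
    rw [hshift]
    exact norm_le_add_norm_add _ _

theorem exists_two_mul_norm_le_add_norm_add_norm (hω : (2 ^ (h + 1) : ℤ) • ω = 0) {a b c : ℤ}
    {β γ : ℕ} (ha : Odd a) (hb : Odd b) (hc : Odd c) (hβ : β ≤ h) (hγ : γ ≤ h) :
    ∃ i : ℤ, 2 * ‖(2 ^ h : ℤ) • ω‖ ≤
      ‖(i * (2 ^ h * a)) • ω‖ + ‖(i * (2 ^ β * b)) • ω‖ + ‖(i * (2 ^ γ * c)) • ω‖ := by
  obtain ⟨s, hs, hB⟩ := exists_even_shift_norm_le hω hβ hb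
  obtain ⟨r, hr, hC⟩ := exists_even_shift_norm_le hω hγ hc
  have hA : ∀ i : ℤ, Odd i → ‖(i * (2 ^ h * a)) • ω‖ = ‖(2 ^ h : ℤ) • ω‖ := fun i hi => by
    rw [show i * (2 ^ h * a) = i * a * 2 ^ h by ring, odd_mul_two_pow_zsmul hω (hi.mul ha)]
  have h₁ : Odd (1 : ℤ) := odd_one
  have h₂ : Odd (1 + s) := odd_one.add_even hs
  have h₃ : Odd (1 + r) := odd_one.add_even hr
  have h₄ : Odd (1 + r + s) := h₃.add_even hs
  have hC' := hC (1 + s) h₂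
  rw [add_right_comm] at hC'
  -- Over the four odd points `1, 1 + s, 1 + r, 1 + r + s` the right-hand side totals at least
  -- `8 ‖2 ^ h • ω‖`.
  by_contra! H
  linarith [H 1, H (1 + s), H (1 + r), H (1 + r + s), hA 1 h₁, hA _ h₂, hA _ h₃, hA _ h₄,
    hB 1 h₁, hB _ h₃, hC 1 h₁]

end TwoPowerTorsion

theorem exists_one_le_norm_add_norm_add_norm {h β γ : ℕ} {a b c : ℤ}
    (ha : Odd a) (hb : Odd b) (hc : Odd c) (hβ : β ≤ h) (hγ : γ ≤ h) :
    ∃ t : ℝ, 1 ≤ ‖((t * (2 ^ h * a : ℤ) : ℝ) : UnitAddCircle)‖ +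
      ‖((t * (2 ^ β * b : ℤ) : ℝ) : UnitAddCircle)‖ +
      ‖((t * (2 ^ γ * c : ℤ) : ℝ) : UnitAddCircle)‖ := by
  set ω : UnitAddCircle := ↑(((2 : ℝ) ^ (h + 1))⁻¹)
  have hcoe : ∀ (i m : ℤ), ((i / 2 ^ (h + 1) * m : ℝ) : UnitAddCircle) = (i * m) • ω := by
    intro i m
    rw [← AddCircle.coe_zsmul, zsmul_eq_mul]
    push_cast
    ring_nf
  have hω : (2 ^ (h + 1) : ℤ) • ω = 0 := by
    rw [← AddCircle.coe_zsmul, zsmul_eq_mul]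
    push_cast
    rw [mul_inv_cancel₀ (by positivity)]
    exact AddCircle.coe_period (p := (1 : ℝ))
  have he : ‖(2 ^ h : ℤ) • ω‖ = 1 / 2 := by
    rw [← AddCircle.coe_zsmul, zsmul_eq_mul]
    push_cast
    rw [show (2 : ℝ) ^ h * (2 ^ (h + 1))⁻¹ = 1 / 2 by rw [pow_succ]; field_simp]
    simpa using AddCircle.norm_half_period_eq (p := (1 : ℝ))
  obtain ⟨i, hi⟩ := exists_two_mul_norm_le_add_norm_add_norm hω ha hb hc hβ hγ
  refine ⟨i / 2 ^ (h + 1), ?_⟩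
  rw [hcoe, hcoe, hcoe]
  linarith

theorem exists_one_le_sum_norm_mul_int (n : Fin 3 → ℤ) (hn : ∀ j, n j ≠ 0) :
    ∃ t : ℝ, 1 ≤ ∑ j, ‖((t * n j : ℝ) : UnitAddCircle)‖ := by
  choose β b hb hnb using fun j => Int.exists_eq_two_pow_mul_odd (hn j)
  obtain ⟨j₀, hj₀⟩ := Finite.exists_max β
  simp only [Fin.sum_univ_three, hnb]
  fin_cases j₀ <;> simp only [Fin.zero_eta, Fin.mk_one, Fin.reduceFinMk] at hj₀ ⊢
  · exact exists_one_le_norm_add_norm_add_norm (hb 0) (hb 1) (hb 2) (hj₀ 1) (hj₀ 2)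
  · obtain ⟨t, ht⟩ := exists_one_le_norm_add_norm_add_norm (hb 1) (hb 0) (hb 2) (hj₀ 0) (hj₀ 2)
    exact ⟨t, by linarith⟩
  · obtain ⟨t, ht⟩ := exists_one_le_norm_add_norm_add_norm (hb 2) (hb 0) (hb 1) (hj₀ 0) (hj₀ 1)
    exact ⟨t, by linarith⟩

theorem exists_one_le_sum_norm_mul_rat (q : Fin 3 → ℚ) (hq : ∀ j, q j ≠ 0) :
    ∃ t : ℝ, 1 ≤ ∑ j, ‖((t * q j : ℝ) : UnitAddCircle)‖ := by
  obtain ⟨⟨N, hN⟩, hNq⟩ := IsLocalization.exist_integer_multiples_of_finite (nonZeroDivisors ℤ) q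
  choose n hn using hNq
  simp only [algebraMap_int_eq, eq_intCast, zsmul_eq_mul] at hn
  have hN0 : N ≠ 0 := nonZeroDivisors.ne_zero hN
  obtain ⟨t, ht⟩ := exists_one_le_sum_norm_mul_int n fun j h => by
    simpa [h, hN0, hq j] using (hn j).symm
  refine ⟨t * N, ?_⟩
  have hmul : ∀ j, t * N * (q j : ℝ) = t * n j := fun j => by
    rw [mul_assoc, ← Rat.cast_intCast (n j), hn j]
    push_cast
    rfl
  simpa only [hmul] using ht

theorem sub_ne_of_fract_mem_Ico {a b D u v : ℝ} (hD : b - a ≤ ‖(D : UnitAddCircle)‖)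
    (hu : Int.fract u ∈ Set.Ico a b) (hv : Int.fract v ∈ Set.Ico a b) : u - v ≠ D := by
  rintro rfl
  have hle : ‖((u - v : ℝ) : UnitAddCircle)‖ ≤ |Int.fract u - Int.fract v| := by
    rw [AddCircle.coe_sub, ← AddCircle.coe_fract u, ← AddCircle.coe_fract v, ← AddCircle.coe_sub]
    exact QuotientAddGroup.norm_mk_le_norm
  have hlt : |Int.fract u - Int.fract v| < b - a :=
    abs_sub_lt_iff.2 ⟨by linarith [hu.2, hv.1], by linarith [hu.1, hv.2]⟩
  linarith

theorem exists_coloring_of_one_le_sum_norm (D : Fin 3 → ℝ)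
    (hD : 1 ≤ ∑ j, ‖(D j : UnitAddCircle)‖) :
    ∃ c : ℝ → Fin 3, ∀ j u v, c u = j → c v = j → u - v ≠ D j := by
  set l : Fin 3 → ℝ := fun j => ‖(D j : UnitAddCircle)‖
  rw [Fin.sum_univ_three] at hD
  let c : ℝ → Fin 3 := fun u =>
    if Int.fract u < l 0 then 0 else if Int.fract u < l 0 + l 1 then 1 else 2
  let lo : Fin 3 → ℝ := ![0, l 0, l 0 + l 1]
  let hi : Fin 3 → ℝ := ![l 0, l 0 + l 1, 1]
  have hmem : ∀ u, Int.fract u ∈ Set.Ico (lo (c u)) (hi (c u)) := by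
    intro u
    simp only [c]
    split_ifs with h₀ h₁
    · exact ⟨Int.fract_nonneg u, h₀⟩
    · exact ⟨not_lt.1 h₀, h₁⟩
    · exact ⟨not_lt.1 h₁, Int.fract_lt_one u⟩
  have hlen : ∀ j, hi j - lo j ≤ l j := by
    intro j
    fin_cases j <;> simp [lo, hi]
    linarith
  refine ⟨c, fun j u v hu hv => ?_⟩
  subst hu
  exact sub_ne_of_fract_mem_Ico (hlen _) (hmem u) (hv ▸ hmem v)

/-- For every 1×3 restriction array of positive reals there is a D-coloring of ℝ
with 3 colors. -/
theorem real_D_colorable_three_colors (d : Fin 3 → ℝ) (hd : ∀ j, 0 < d j) :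
    ∃ c : ℝ → Fin 3, ∀ j : Fin 3, ∀ x y : ℝ,
      x ≠ y → c x = j → c y = j → |x - y| ≠ d j := by
  obtain ⟨f, hf⟩ := Module.exists_dual_forall_apply_ne_zero (K := ℚ) d fun j => (hd j).ne'
  obtain ⟨t, ht⟩ := exists_one_le_sum_norm_mul_rat (fun j => f (d j)) hf
  obtain ⟨c, hc⟩ := exists_coloring_of_one_le_sum_norm (fun j => t * f (d j)) ht
  have hcf : ∀ j x y, c (t * f x) = j → c (t * f y) = j → x - y ≠ d j := by
    intro j x y hx hy hxy
    exact hc j _ _ hx hy (by rw [← hxy, map_sub, Rat.cast_sub, mul_sub])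
  refine ⟨fun x => c (t * f x), fun j x y _ hx hy hxy => ?_⟩
  rcases eq_or_eq_neg_of_abs_eq hxy with h | h
  · exact hcf j x y hx hy h
  · exact hcf j y x hy hx (by linarith)
end

section
/- For every positive real d₁, there exists a pair of positive reals (d₁, d₂) such that ℝ admits no 2-coloring where no two points of color 1 are at distance d₁ and no two points of color 2 are at distance d₂. Hence the upper chromatic number of ℝ is greater than 2. -/
/-!
Take `d₂ = 2 d₁`. If some point `x` had color 1, then `x + 2d₁` has color 0, hence its
neighbour `x + d₁` has color 1, hence `x + 3d₁` has color 0: two points of color 0 at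
distance `d₁`. So every point has color 0, which is absurd.
-/

lemma Real.add_ne_color_of_forbidden_distance {ι : Type*} {c : ℝ → ι} {j : ι} {d : ℝ}
    (hd : 0 < d) (h : ∀ x y : ℝ, x ≠ y → c x = j → c y = j → |x - y| ≠ d)
    (x : ℝ) (hx : c x = j) : c (x + d) ≠ j := fun hxd =>
  h x (x + d) (by linarith) hx hxd (by rw [sub_add_cancel_left, abs_neg, abs_of_pos hd])

lemma false_of_two_coloring_avoiding_shifts {M : Type*} [AddCommMonoid M]
    {c : M → Fin 2} {d : M}
    (h₀ : ∀ x, c x = 0 → c (x + d) ≠ 0) (h₁ : ∀ x, c x = 1 → c (x + 2 • d) ≠ 1) :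
    False := by
  have eq_one_of_ne_zero : ∀ y, c y ≠ 0 → c y = 1 := fun y => Fin.eq_one_of_ne_zero _
  have all_zero : ∀ x, c x = 0 := by
    intro x
    by_contra hx
    have hx₂ : c (x + 2 • d) = 0 := by
      by_contra h
      exact h₁ x (eq_one_of_ne_zero x hx) (eq_one_of_ne_zero _ h)
    have hx₁ : c (x + d) = 1 := eq_one_of_ne_zero _ fun h =>
      h₀ _ h (by convert hx₂ using 2; abel)
    have hx₃ : c (x + 3 • d) = 0 := by
      by_contra h
      exact h₁ _ hx₁ (by convert eq_one_of_ne_zero _ h using 2; abel)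
    exact h₀ _ hx₂ (by convert hx₃ using 2; abel)
  exact h₀ 0 (all_zero 0) (all_zero _)

/-- For every positive real d₁ there is a positive real d₂ such that ℝ admits no
2-coloring where color 0 avoids distance d₁ and color 1 avoids distance d₂.
Hence the upper chromatic number of ℝ is greater than 2. -/
theorem upper_chromatic_real_gt_two (d₁ : ℝ) (hd₁ : 0 < d₁) :
    ∃ d₂ : ℝ, 0 < d₂ ∧
      ¬ ∃ c : ℝ → Fin 2, ∀ x y : ℝ, x ≠ y →
        (c x = 0 → c y = 0 → |x - y| ≠ d₁) ∧
        (c x = 1 → c y = 1 → |x - y| ≠ d₂) := by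
  refine ⟨2 • d₁, by positivity, ?_⟩
  rintro ⟨c, hc⟩
  exact false_of_two_coloring_avoiding_shifts
    (Real.add_ne_color_of_forbidden_distance hd₁ fun x y hxy => (hc x y hxy).1)
    (Real.add_ne_color_of_forbidden_distance (by positivity) fun x y hxy => (hc x y hxy).2)
end

section
/- The upper chromatic number of ℝ equals 3: for every triple of positive reals (d₁,d₂,d₃) there is a 3-coloring of ℝ avoiding distance dⱼ within color j, and there exists a pair (d₁,d₂) of positive reals for which no such 2-coloring exists. -/
/-!
A ℚ-linear functional `ψ : ℝ → ℚ` that vanishes at no `dⱼ`, scaled so that every `ψ dⱼ` is an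
integer `mⱼ ≠ 0`, satisfies `⌊ψ (x + dⱼ)⌋ = ⌊ψ x⌋ + mⱼ`; so a colouring of `ℤ` in which colour `j`
avoids the difference `mⱼ` pulls back along `⌊ψ⌋`. On `ℤ` write `mⱼ = 2 ^ vⱼ * uⱼ` with `uⱼ` odd.
If two valuations agree, the parity of `⌊y / 2 ^ v⌋` colours `ℤ` with those two colours. If
`v₀ < v₁ < v₂`, multiplying by an inverse of `u₀` modulo `2 ^ (v₂ + 1)` turns `m₀` into `2 ^ v₀`
modulo `2 ^ (v₂ + 1)`, and three binary digits of `y` decide its colour.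

Two colours do not suffice for the distances `1` and `2`: colour `1` at `x` forces colour `0` at
`x + 2` and colour `1` at `x + 3`, which leaves no colour for `x + 1`.
-/

open Function

def IsShiftColoring {G ι : Type*} [Add G] (δ : ι → G) (c : G → ι) : Prop :=
  ∀ x, c (x + δ (c x)) ≠ c x

namespace IsShiftColoring

variable {G H ι κ : Type*} [Add G] [Add H]

theorem comp_right {δ : ι → G} {δ' : ι → H} {f : G → H} {c : H → ι}
    (hc : IsShiftColoring δ' c) (hf : ∀ x i, f (x + δ i) = f x + δ' i) :
    IsShiftColoring δ (c ∘ f) := fun x => by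
  simpa only [comp_apply, hf] using hc (f x)

theorem comp_left {δ : ι → G} {e : κ → ι} {c : G → κ}
    (hc : IsShiftColoring (δ ∘ e) c) (he : Injective e) :
    IsShiftColoring δ (e ∘ c) := fun x => he.ne (hc x)

end IsShiftColoring

theorem isShiftColoring_iff_abs_sub_ne {G ι : Type*} [AddCommGroup G] [LinearOrder G]
    [IsOrderedAddMonoid G] {d : ι → G} (hd : ∀ i, 0 < d i) (c : G → ι) :
    IsShiftColoring d c ↔ ∀ j x y, x ≠ y → c x = j → c y = j → |x - y| ≠ d j := by
  constructor
  · rintro hc j x y - rfl hy h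
    have hsub : ∀ x y, c x = c y → y - x ≠ d (c x) := fun x y hxy h =>
      hc x (by rw [← h, add_sub_cancel, hxy])
    rcases eq_or_eq_neg_of_abs_eq h with h | h
    · exact hsub y x hy (hy ▸ h)
    · exact hsub x y hy.symm (by rw [← neg_sub, h, neg_neg])
  · intro h x hx
    exact h _ x _ (by simpa using (hd (c x)).ne') rfl hx (by simpa using (hd (c x)).le)

theorem not_isShiftColoring_add_self {G : Type*} [AddSemigroup G] [Nonempty G] (a : G)
    (c : G → Fin 2) : ¬IsShiftColoring ![a, a + a] c := by
  intro hc
  have h₀ : ∀ x, c x = 0 → c (x + a) = 1 := fun x hx =>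
    Fin.eq_one_of_ne_zero _ (by simpa [hx] using hc x)
  have h₁ : ∀ x, c x = 1 → c (x + a + a) = 0 := fun x hx => by
    have := hc x
    simp only [hx, Matrix.cons_val_one, Matrix.cons_val_fin_one, ← add_assoc] at this
    by_contra h
    exact this (Fin.eq_one_of_ne_zero _ h)
  have h_ne_one : ∀ x, c x ≠ 1 := by
    intro x hx
    by_cases h : c (x + a) = 0
    · exact absurd (h₀ _ h) (by rw [h₁ x hx]; decide)
    · exact absurd (h₁ _ (Fin.eq_one_of_ne_zero _ h)) (by rw [h₀ _ (h₁ x hx)]; decide)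
  obtain ⟨x⟩ := ‹Nonempty G›
  by_cases h : c x = 0
  · exact h_ne_one _ (h₀ x h)
  · exact h_ne_one x (Fin.eq_one_of_ne_zero _ h)

namespace Int

theorem exists_eq_two_pow_mul_odd_s4 {m : ℤ} (hm : m ≠ 0) :
    ∃ (v : ℕ) (u : ℤ), Odd u ∧ m = 2 ^ v * u := by
  obtain ⟨u, hu, hnd⟩ :=
    (finiteMultiplicity_iff (a := 2).mpr ⟨by norm_num, hm⟩).exists_eq_pow_mul_and_not_dvd
  exact ⟨_, u, not_even_iff_odd.mp (by rwa [even_iff_two_dvd]), hu⟩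

theorem even_add_two_pow_mul_ediv_iff (x : ℤ) (j : ℕ) {u : ℤ} (hu : Odd u) :
    Even ((x + 2 ^ j * u) / 2 ^ j) ↔ ¬Even (x / 2 ^ j) := by
  rw [add_mul_ediv_left _ _ (by positivity), even_add, ← not_odd_iff_even (n := u)]
  tauto

theorem even_add_two_pow_mul_ediv_of_lt (x w : ℤ) {j k : ℕ} (hjk : j < k) :
    Even ((x + 2 ^ k * w) / 2 ^ j) ↔ Even (x / 2 ^ j) := by
  have hk : (2 : ℤ) ^ k * w = 2 ^ j * (2 * (2 ^ (k - j - 1) * w)) := by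
    rw [← mul_assoc, ← mul_assoc, ← pow_succ, ← pow_add]
    congr 2
    omega
  rw [hk, add_mul_ediv_left _ _ (by positivity), even_add]
  simp

theorem add_two_pow_ediv_two_pow (x : ℤ) {a b : ℕ} (hab : a ≤ b) :
    (x + 2 ^ a) / 2 ^ b = x / 2 ^ b ∨ (x + 2 ^ a) / 2 ^ b = x / 2 ^ b + 1 := by
  have hpos : (0 : ℤ) < 2 ^ b := by positivity
  have hle : (x + 2 ^ a) / 2 ^ b ≤ x / 2 ^ b + 1 :=
    calc (x + 2 ^ a) / 2 ^ b ≤ (x + 2 ^ b * 1) / 2 ^ b :=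
          Int.ediv_le_ediv hpos (by rw [mul_one]; gcongr; norm_num)
      _ = x / 2 ^ b + 1 := add_mul_ediv_left x 1 hpos.ne'
  have hge : x / 2 ^ b ≤ (x + 2 ^ a) / 2 ^ b :=
    Int.ediv_le_ediv hpos (by linarith [pow_pos (two_pos : (0 : ℤ) < 2) a])
  omega

theorem ediv_two_pow_eq_of_ediv_two_pow_eq {x y : ℤ} {b c : ℕ} (hbc : b ≤ c)
    (h : x / 2 ^ b = y / 2 ^ b) : x / 2 ^ c = y / 2 ^ c := by
  have hc : (2 : ℤ) ^ c = 2 ^ b * 2 ^ (c - b) := by rw [← pow_add]; congr 1; omega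
  rw [hc, ← ediv_ediv_of_nonneg (by positivity), ← ediv_ediv_of_nonneg (by positivity), h]

end Int

/-- `Even (y / 2 ^ j)` says that binary digit `j` of `y` is `0`; since `/` rounds down for a
positive divisor, these are the two's-complement digits when `y < 0`. -/
def bitColoring (a b c : ℕ) (y : ℤ) : Fin 3 :=
  if Even (y / 2 ^ a) ↔ Even (y / 2 ^ c) then 2 else if Even (y / 2 ^ b) then 0 else 1

section bitColoring

variable {a b c : ℕ} {y : ℤ}

theorem bitColoring_eq_zero :
    bitColoring a b c y = 0 ↔ ¬(Even (y / 2 ^ a) ↔ Even (y / 2 ^ c)) ∧ Even (y / 2 ^ b) := by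
  unfold bitColoring; split_ifs <;> simp_all

theorem bitColoring_eq_one :
    bitColoring a b c y = 1 ↔ ¬(Even (y / 2 ^ a) ↔ Even (y / 2 ^ c)) ∧ ¬Even (y / 2 ^ b) := by
  unfold bitColoring; split_ifs <;> simp_all

theorem bitColoring_eq_two :
    bitColoring a b c y = 2 ↔ (Even (y / 2 ^ a) ↔ Even (y / 2 ^ c)) := by
  unfold bitColoring; split_ifs <;> simp_all

open Int in
theorem isShiftColoring_bitColoring {w u₁ u₂ : ℤ} (hab : a < b) (hbc : b < c)
    (hu₁ : Odd u₁) (hu₂ : Odd u₂) :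
    IsShiftColoring ![2 ^ a + 2 ^ (c + 1) * w, 2 ^ b * u₁, 2 ^ c * u₂] (bitColoring a b c) := by
  intro y
  obtain h | h | h : bitColoring a b c y = 0 ∨ bitColoring a b c y = 1 ∨
      bitColoring a b c y = 2 := by omega
  · rw [h, ne_eq, Matrix.cons_val_zero, ← add_assoc, bitColoring_eq_zero,
      even_add_two_pow_mul_ediv_of_lt _ w (Nat.lt_succ_of_lt (hab.trans hbc)),
      even_add_two_pow_mul_ediv_of_lt _ w (Nat.lt_succ_of_lt hbc),
      even_add_two_pow_mul_ediv_of_lt _ w (Nat.lt_succ_self c)]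
    rw [bitColoring_eq_zero] at h
    have ha := even_add_two_pow_mul_ediv_iff y a odd_one
    rw [mul_one] at ha
    -- Either the carry of `+ 2 ^ a` reaches digit `b`, or digit `c` is untouched while digit `a`
    -- flips.
    rcases add_two_pow_ediv_two_pow y hab.le with hb | hb
    · rw [ha, hb, ediv_two_pow_eq_of_ediv_two_pow_eq hbc.le hb]
      tauto
    · rw [hb, even_add_one]
      tauto
  · rw [h, ne_eq, Matrix.cons_val_one, Matrix.cons_val_zero, bitColoring_eq_one,
      even_add_two_pow_mul_ediv_iff y b hu₁]
    rw [bitColoring_eq_one] at h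
    tauto
  · rw [h, ne_eq, Matrix.cons_val_two, Matrix.tail_cons, Matrix.head_cons, bitColoring_eq_two,
      even_add_two_pow_mul_ediv_iff y c hu₂, even_add_two_pow_mul_ediv_of_lt y u₂ (hab.trans hbc)]
    rw [bitColoring_eq_two] at h
    tauto

end bitColoring

theorem isShiftColoring_of_eq_two_pow_mul_odd {ι : Type*} {δ : ι → ℤ} {i j : ι} (hij : i ≠ j)
    {v : ℕ} {u₁ u₂ : ℤ} (hu₁ : Odd u₁) (hu₂ : Odd u₂) (hi : δ i = 2 ^ v * u₁)
    (hj : δ j = 2 ^ v * u₂) :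
    IsShiftColoring δ (fun y => if Even (y / 2 ^ v) then i else j) := by
  intro y
  by_cases h : Even (y / 2 ^ v)
  · simp [h, hi, Int.even_add_two_pow_mul_ediv_iff y v hu₁, hij.symm]
  · simp [h, hj, Int.even_add_two_pow_mul_ediv_iff y v hu₂, hij]

theorem exists_isShiftColoring_of_two_pow_mul_odd_of_lt {δ : Fin 3 → ℤ} {a b c : ℕ}
    {u₀ u₁ u₂ : ℤ} (hu₀ : Odd u₀) (hu₁ : Odd u₁) (hu₂ : Odd u₂) (h₀ : δ 0 = 2 ^ a * u₀)
    (h₁ : δ 1 = 2 ^ b * u₁) (h₂ : δ 2 = 2 ^ c * u₂) (hab : a < b) (hbc : b < c) :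
    ∃ g : ℤ → Fin 3, IsShiftColoring δ g := by
  obtain ⟨t, s, hts⟩ := (Int.isCoprime_two_right.mpr hu₀).pow_right (n := c + 1)
  have ht : Odd t := by
    have : Odd (t * u₀ + s * 2 ^ (c + 1)) := hts ▸ odd_one
    rw [Int.odd_add, iff_true_intro ((even_two.pow_of_ne_zero c.succ_ne_zero).mul_left s),
      iff_true] at this
    exact (Int.odd_mul.mp this).1
  refine ⟨_, (isShiftColoring_bitColoring (w := -(2 ^ a * s)) hab hbc (ht.mul hu₁)
    (ht.mul hu₂)).comp_right (f := (t * ·)) fun x i => ?_⟩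
  fin_cases i
  · simp only [Fin.zero_eta, h₀, Matrix.cons_val_zero]
    linear_combination (2 : ℤ) ^ a * hts
  · simp only [Fin.mk_one, h₁, Matrix.cons_val_one, Matrix.cons_val_zero]
    ring
  · simp only [Fin.reduceFinMk, h₂, Matrix.cons_val_two, Matrix.tail_cons, Matrix.head_cons]
    ring

theorem exists_isShiftColoring_int_of_ne_zero {δ : Fin 3 → ℤ} (hδ : ∀ i, δ i ≠ 0) :
    ∃ g : ℤ → Fin 3, IsShiftColoring δ g := by
  choose v u hu hvu using fun i => Int.exists_eq_two_pow_mul_odd_s4 (hδ i)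
  by_cases hv : Injective v
  · set σ := Tuple.sort v
    have hσ : StrictMono (v ∘ σ) :=
      (Tuple.monotone_sort v).strictMono_of_injective (hv.comp σ.injective)
    obtain ⟨g, hg⟩ := exists_isShiftColoring_of_two_pow_mul_odd_of_lt (δ := δ ∘ σ)
      (hu _) (hu _) (hu _) (hvu _) (hvu _) (hvu _)
      (hσ (show (0 : Fin 3) < 1 by decide)) (hσ (show (1 : Fin 3) < 2 by decide))
    exact ⟨σ ∘ g, hg.comp_left σ.injective⟩
  · obtain ⟨i, j, hij, hne⟩ : ∃ i j, v i = v j ∧ i ≠ j := by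
      simpa [Injective] using hv
    exact ⟨_, isShiftColoring_of_eq_two_pow_mul_odd hne (hu i) (hu j) (hvu i) (hij ▸ hvu j)⟩

theorem Rat.exists_nat_mul_eq_intCast {ι : Type*} [Finite ι] (q : ι → ℚ) :
    ∃ N : ℕ, N ≠ 0 ∧ ∀ i, ∃ z : ℤ, N * q i = z := by
  have := Fintype.ofFinite ι
  refine ⟨∏ i, (q i).den, Finset.prod_ne_zero_iff.mpr fun i _ => (q i).den_ne_zero, fun i => ?_⟩
  obtain ⟨k, hk⟩ := Finset.dvd_prod_of_mem (fun i => (q i).den) (Finset.mem_univ i)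
  exact ⟨k * (q i).num, by rw [hk]; push_cast; rw [← Rat.mul_den_eq_num]; ring⟩

theorem exists_int_map_add_eq {V ι : Type*} [AddCommGroup V] [Module ℚ V] [Finite ι]
    {d : ι → V} (hd : ∀ i, d i ≠ 0) :
    ∃ (f : V → ℤ) (m : ι → ℤ), (∀ i, m i ≠ 0) ∧ ∀ x i, f (x + d i) = f x + m i := by
  obtain ⟨ψ, hψ⟩ := Module.exists_dual_forall_apply_ne_zero (K := ℚ) d hd
  obtain ⟨N, hN, hNψ⟩ := Rat.exists_nat_mul_eq_intCast fun i => ψ (d i)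
  choose m hm using hNψ
  refine ⟨fun x => ⌊(N : ℚ) * ψ x⌋, m, fun i hi => hψ i ?_, fun x i => ?_⟩
  · simpa [hi, hN] using hm i
  · dsimp only
    rw [map_add, mul_add, hm, Int.floor_add_intCast]

/-- The upper chromatic number of ℝ equals 3: every 1×3 restriction array admits
a D-coloring, but some 1×2 restriction array admits none. -/
theorem upper_chromatic_real_eq_three :
    (∀ d : Fin 3 → ℝ, (∀ j, 0 < d j) →
      ∃ c : ℝ → Fin 3, ∀ j : Fin 3, ∀ x y : ℝ,
        x ≠ y → c x = j → c y = j → |x - y| ≠ d j) ∧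
    (∃ d : Fin 2 → ℝ, (∀ j, 0 < d j) ∧
      ¬ ∃ c : ℝ → Fin 2, ∀ j : Fin 2, ∀ x y : ℝ,
        x ≠ y → c x = j → c y = j → |x - y| ≠ d j) := by
  have hd₂ : ∀ j, 0 < ![(1 : ℝ), 1 + 1] j := fun j => by fin_cases j <;> norm_num
  refine ⟨fun d hd => ?_, ⟨_, hd₂, ?_⟩⟩
  · obtain ⟨f, m, hm, hf⟩ := exists_int_map_add_eq fun j => (hd j).ne'
    obtain ⟨g, hg⟩ := exists_isShiftColoring_int_of_ne_zero hm
    exact ⟨g ∘ f, (isShiftColoring_iff_abs_sub_ne hd _).mp (hg.comp_right hf)⟩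
  · rintro ⟨c, hc⟩
    exact not_isShiftColoring_add_self 1 c ((isShiftColoring_iff_abs_sub_ne hd₂ c).mpr hc)
end

section
/- If S ⊆ ℝⁿ is a finite set with |S| = b such that the set of pairwise distances among distinct points of S has at most k elements, then the k-th upper chromatic number of ℝⁿ is at least b: there exists a k×(b−1) restriction array D of positive reals such that ℝⁿ admits no D-coloring with b−1 colors. -/
/-!
Pigeonhole: if `S` has `b` points, any colouring with `b - 1` colours gives two distinct points
of `S` the same colour, and their distance is one of the at most `k` distances of `S`. So the array
whose `i`-th row is constantly the `i`-th distance of `S` (padded by `1` up to `k` rows) admits no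
colouring.
-/

open Set

theorem Set.Finite.exists_subset_range_subset_insert {α : Type*} {T : Set α} (hT : T.Finite)
    {k : ℕ} (hk : T.ncard ≤ k) (a : α) :
    ∃ f : Fin k → α, T ⊆ range f ∧ range f ⊆ insert a T := by
  have := hT.to_subtype
  let e : T ≃ Fin T.ncard := Finite.equivFin T
  refine ⟨fun i => if h : (i : ℕ) < T.ncard then e.symm ⟨i, h⟩ else a, ?_, ?_⟩
  · intro d hd
    refine ⟨Fin.castLE hk (e ⟨d, hd⟩), ?_⟩
    simp
  · rintro _ ⟨i, rfl⟩
    dsimp only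
    split_ifs
    · exact mem_insert_of_mem a (Subtype.prop _)
    · exact mem_insert a T

namespace Metric

variable {X : Type*} [MetricSpace X]

def distSet (S : Set X) : Set ℝ := {d : ℝ | ∃ x ∈ S, ∃ y ∈ S, x ≠ y ∧ d = dist x y}

theorem _root_.Set.Finite.distSet {S : Set X} (hS : S.Finite) : (distSet S).Finite :=
  (hS.image2 dist hS).subset fun _ ⟨x, hx, y, hy, _, hd⟩ => ⟨x, hx, y, hy, hd.symm⟩

theorem pos_of_mem_distSet {S : Set X} {d : ℝ} (hd : d ∈ distSet S) : 0 < d := by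
  obtain ⟨x, -, y, -, hxy, rfl⟩ := hd
  exact dist_pos.2 hxy

theorem exists_dist_mem_distSet_of_ncard_lt {S : Set X} {m : ℕ} (hS : m < S.ncard)
    (c : X → Fin m) : ∃ x y, x ≠ y ∧ c x = c y ∧ dist x y ∈ distSet S := by
  obtain ⟨x, hx, y, hy, hxy, hc⟩ :=
    exists_ne_map_eq_of_ncard_lt_of_maps_to (t := univ) (by simpa using hS)
      (fun a _ => mem_univ (c a))
  exact ⟨x, y, hxy, hc, x, hx, y, hy, hxy, rfl⟩

end Metric

theorem kth_upper_chromatic_lower_bound_general (n k b : ℕ)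
    (S : Set (EuclideanSpace ℝ (Fin n))) (hcard : S.ncard = b)
    (hdist : ({d : ℝ | ∃ x ∈ S, ∃ y ∈ S, x ≠ y ∧ d = dist x y}).ncard ≤ k) :
    ∃ D : Fin k → Fin (b - 1) → ℝ, (∀ i j, 0 < D i j) ∧
      ¬ ∃ c : EuclideanSpace ℝ (Fin n) → Fin (b - 1),
        ∀ (i : Fin k) (j : Fin (b - 1)) (x y : EuclideanSpace ℝ (Fin n)),
          x ≠ y → c x = j → c y = j → dist x y ≠ D i j := by
  rcases Nat.eq_zero_or_pos b with rfl | hb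
  · exact ⟨fun _ _ => 1, fun _ _ => one_pos, fun ⟨c, _⟩ => (c 0).elim0⟩
  have hS : S.Finite := finite_of_ncard_pos (hcard ▸ hb)
  obtain ⟨f, hcover, hrange⟩ := hS.distSet.exists_subset_range_subset_insert hdist 1
  refine ⟨fun i _ => f i, fun i _ => (?_ : 0 < f i), ?_⟩
  · rcases mem_insert_iff.1 (hrange (mem_range_self i)) with h | h
    · exact h ▸ one_pos
    · exact Metric.pos_of_mem_distSet h
  · rintro ⟨c, hc⟩
    obtain ⟨x, y, hxy, hcxy, hd⟩ :=
      Metric.exists_dist_mem_distSet_of_ncard_lt (S := S) (by omega) c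
    obtain ⟨i, hi⟩ := hcover hd
    exact hc i (c x) x y hxy rfl hcxy.symm hi.symm

/-- If S ⊆ ℝⁿ is finite of size b with at most k distinct pairwise distances,
then there is a k×(b−1) restriction array admitting no D-coloring of ℝⁿ;
hence χ̂⁽ᵏ⁾(ℝⁿ) ≥ b. -/
theorem kth_upper_chromatic_lower_bound (n k b : ℕ)
    (S : Set (EuclideanSpace ℝ (Fin n))) (hfin : S.Finite) (hcard : S.ncard = b)
    (hdist : ({d : ℝ | ∃ x ∈ S, ∃ y ∈ S, x ≠ y ∧ d = dist x y}).ncard ≤ k) :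
    ∃ D : Fin k → Fin (b - 1) → ℝ, (∀ i j, 0 < D i j) ∧
      ¬ ∃ c : EuclideanSpace ℝ (Fin n) → Fin (b - 1),
        ∀ (i : Fin k) (j : Fin (b - 1)) (x y : EuclideanSpace ℝ (Fin n)),
          x ≠ y → c x = j → c y = j → dist x y ≠ D i j :=
  kth_upper_chromatic_lower_bound_general n k b S hcard hdist
end

section
/- For every k ≥ 1, the k-th upper chromatic number of ℝ is greater than k: there exists a k×k restriction array D such that ℝ has no D-coloring with k colors. -/
/-!
Take the array whose `i`-th row forbids the distance `i + 1` in every colour. Among the `k + 1`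
points `0, 1, …, k`, two get the same colour by pigeonhole, and their distance lies in `{1, …, k}`,
so it is forbidden for that colour by one of the rows.
-/

theorem exists_lt_le_map_eq_of_card_le {α : Type*} [Fintype α] {k : ℕ} (f : ℕ → α)
    (hcard : Fintype.card α ≤ k) : ∃ m n, m < n ∧ n ≤ k ∧ f m = f n := by
  obtain ⟨a, b, hab, hfab⟩ := Fintype.exists_ne_map_eq_of_card_lt
    (fun t : Fin (k + 1) => f t) (by simpa using Nat.lt_succ_of_le hcard)
  rcases Fin.lt_or_lt_of_ne hab with hlt | hlt
  · exact ⟨a, b, hlt, Nat.lt_succ_iff.mp b.isLt, hfab⟩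
  · exact ⟨b, a, hlt, Nat.lt_succ_iff.mp a.isLt, hfab.symm⟩

theorem abs_natCast_sub_natCast_of_lt {m n : ℕ} (h : m < n) :
    |(m : ℝ) - n| = ((n - m - 1 : ℕ) : ℝ) + 1 := by
  rw [abs_sub_comm, abs_of_nonneg (by simpa using h.le), ← Nat.cast_add_one,
    Nat.sub_add_cancel (by omega), Nat.cast_sub h.le]

theorem kth_upper_chromatic_real_gt_k_general (k : ℕ) :
    ∃ D : Fin k → Fin k → ℝ, (∀ i j, 0 < D i j) ∧
      ¬ ∃ c : ℝ → Fin k, ∀ (i j : Fin k) (x y : ℝ),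
        x ≠ y → c x = j → c y = j → |x - y| ≠ D i j := by
  refine ⟨fun i _ => (i : ℝ) + 1, fun _ _ => by positivity, ?_⟩
  rintro ⟨c, hc⟩
  obtain ⟨m, n, hmn, hnk, hcol⟩ :=
    exists_lt_le_map_eq_of_card_le (fun t : ℕ => c t) (Fintype.card_fin k).le
  exact hc ⟨n - m - 1, by omega⟩ (c m) m n (by exact_mod_cast hmn.ne) rfl hcol.symm
    (abs_natCast_sub_natCast_of_lt hmn)

/-- For every k ≥ 1 there is a k×k restriction array D such that ℝ admits no
D-coloring with k colors; hence χ̂⁽ᵏ⁾(ℝ) > k. -/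
theorem kth_upper_chromatic_real_gt_k (k : ℕ) (hk : 1 ≤ k) :
    ∃ D : Fin k → Fin k → ℝ, (∀ i j, 0 < D i j) ∧
      ¬ ∃ c : ℝ → Fin k, ∀ (i j : Fin k) (x y : ℝ),
        x ≠ y → c x = j → c y = j → |x - y| ≠ D i j :=
  kth_upper_chromatic_real_gt_k_general k
end

section
/- The vertices of a regular (2k+1)-gon in the Euclidean plane form a k-distance set: the number of distinct pairwise distances among the 2k+1 vertices equals k. -/
/-!
Two points at angles `a` and `b` on the unit circle are at distance `2 |sin ((a - b) / 2)|`, so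
vertices `i > j` of the regular `n`-gon are at distance `2 sin (π (i - j) / n)`. Since
`sin (π - x) = sin x`, the differences `m` and `n - m` give the same chord, so the distances are
the chords for `m = 1, …, ⌊n/2⌋`; these are pairwise different because `sin` is strictly
increasing on `[0, π/2]`.
-/

open Real Set

lemma EuclideanSpace.dist_eq_two_mul_abs_sin_of_cos_sin {x y : EuclideanSpace ℝ (Fin 2)}
    {a b : ℝ} (hx : ⇑x = ![cos a, sin a]) (hy : ⇑y = ![cos b, sin b]) :
    dist x y = 2 * |sin ((a - b) / 2)| := by
  have hsq : ∑ i : Fin 2, dist (x i) (y i) ^ 2 = (2 * |sin ((a - b) / 2)|) ^ 2 := by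
    have hcos : cos (a - b) = 1 - 2 * sin ((a - b) / 2) ^ 2 := by
      conv_lhs => rw [show a - b = 2 * ((a - b) / 2) by ring, cos_two_mul', cos_sq']
      ring
    simp only [Fin.sum_univ_two, hx, hy, Real.dist_eq, sq_abs, mul_pow,
      Matrix.cons_val_zero, Matrix.cons_val_one]
    rw [cos_sub] at hcos
    nlinarith [sin_sq_add_cos_sq a, sin_sq_add_cos_sq b]
  rw [EuclideanSpace.dist_eq, hsq, sqrt_sq (by positivity)]

/-- The length of a chord of the unit circle subtending `m` sides of the regular `n`-gon. -/
noncomputable def regularPolygonChord (n m : ℕ) : ℝ := 2 * sin (π * m / n)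

lemma regularPolygonChord_sub (n : ℕ) {m : ℕ} (hm : m ≤ n) :
    regularPolygonChord n (n - m) = regularPolygonChord n m := by
  rcases n.eq_zero_or_pos with rfl | hn
  · simp [regularPolygonChord]
  rw [regularPolygonChord, regularPolygonChord, Nat.cast_sub hm, ← sin_pi_sub]
  congr 2
  field_simp
  ring

lemma regularPolygonChord_strictMonoOn (n : ℕ) :
    StrictMonoOn (regularPolygonChord n) (Iic (n / 2)) := by
  intro m hm m' hm' hlt
  have hn : (0 : ℝ) < n := by
    have : m' ≤ n / 2 := hm'
    exact_mod_cast (by omega : 0 < n)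
  have hangle : ∀ p ∈ Iic (n / 2), π * p / n ∈ Icc (-(π / 2)) (π / 2) := by
    intro p hp
    have hp : (p : ℝ) * 2 ≤ n := by exact_mod_cast (Nat.le_div_iff_mul_le two_pos).mp hp
    refine ⟨by linarith [pi_pos, show 0 ≤ π * p / n by positivity], ?_⟩
    rw [div_le_iff₀ hn]
    nlinarith [pi_pos]
  refine mul_lt_mul_of_pos_left (strictMonoOn_sin (hangle m hm) (hangle m' hm') ?_) two_pos
  gcongr

section RegularPolygon

variable {n : ℕ} {v : Fin n → EuclideanSpace ℝ (Fin 2)}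

lemma regularPolygon_dist_eq_chord
    (hv : ∀ j, ⇑(v j) = ![cos (2 * π * j / n), sin (2 * π * j / n)])
    {i j : Fin n} (hji : j ≤ i) : dist (v i) (v j) = regularPolygonChord n (i - j) := by
  rw [EuclideanSpace.dist_eq_two_mul_abs_sin_of_cos_sin (hv i) (hv j), regularPolygonChord,
    Nat.cast_sub (Fin.le_iff_val_le_val.mp hji)]
  have hn : (0 : ℝ) < n := by exact_mod_cast i.pos
  have hangle : (2 * π * i / n - 2 * π * j / n) / 2 = π * ((i : ℝ) - j) / n := by
    field_simp
  rw [hangle, abs_of_nonneg]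
  apply sin_nonneg_of_nonneg_of_le_pi
  · have : (j : ℝ) ≤ i := by exact_mod_cast hji
    have : 0 ≤ (i : ℝ) - j := by linarith
    positivity
  · rw [div_le_iff₀ hn]
    have : (i : ℝ) < n := by exact_mod_cast i.isLt
    nlinarith [pi_pos, (j.val.cast_nonneg : (0 : ℝ) ≤ j)]

lemma regularPolygon_dists_eq_image_chord
    (hv : ∀ j, ⇑(v j) = ![cos (2 * π * j / n), sin (2 * π * j / n)]) :
    {d : ℝ | ∃ i j : Fin n, i ≠ j ∧ d = dist (v i) (v j)}
      = regularPolygonChord n '' Icc 1 (n / 2) := by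
  ext d
  constructor
  · rintro ⟨i, j, hij, rfl⟩
    wlog hji : j < i generalizing i j
    · rw [dist_comm]
      exact this j i hij.symm (lt_of_le_of_ne (not_lt.mp hji) hij)
    rw [regularPolygon_dist_eq_chord hv hji.le]
    have hlt : (i : ℕ) - j < n := by omega
    by_cases hhalf : (i : ℕ) - j ≤ n / 2
    · exact ⟨i - j, ⟨by omega, hhalf⟩, rfl⟩
    · exact ⟨n - (i - j), ⟨by omega, by omega⟩, regularPolygonChord_sub n hlt.le⟩
  · rintro ⟨m, ⟨hm1, hm2⟩, rfl⟩
    have hmn : m < n := by omega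
    refine ⟨⟨m, hmn⟩, ⟨0, by omega⟩, by simp [Fin.ext_iff]; omega, ?_⟩
    rw [regularPolygon_dist_eq_chord hv (Fin.le_iff_val_le_val.mpr m.zero_le)]
    rfl

theorem regularPolygon_ncard_dists
    (hv : ∀ j, ⇑(v j) = ![cos (2 * π * j / n), sin (2 * π * j / n)]) :
    {d : ℝ | ∃ i j : Fin n, i ≠ j ∧ d = dist (v i) (v j)}.ncard = n / 2 := by
  rw [regularPolygon_dists_eq_image_chord hv,
    ((regularPolygonChord_strictMonoOn n).injOn.mono Icc_subset_Iic_self).ncard_image,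
    ← Finset.coe_Icc, ncard_coe_finset, Nat.card_Icc, Nat.add_sub_cancel]

end RegularPolygon

theorem regular_odd_gon_k_distance_set_general (k : ℕ)
    (v : Fin (2 * k + 1) → EuclideanSpace ℝ (Fin 2))
    (hv : ∀ j, v j = ![Real.cos (2 * Real.pi * j / (2 * k + 1)),
                       Real.sin (2 * Real.pi * j / (2 * k + 1))]) :
    ({d : ℝ | ∃ i j : Fin (2 * k + 1), i ≠ j ∧ d = dist (v i) (v j)}).ncard = k := by
  rw [regularPolygon_ncard_dists (fun j => by push_cast; exact hv j)]
  omega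

/-- The vertices of a regular (2k+1)-gon form a k-distance set: the set of
pairwise distances between distinct vertices has exactly k elements. -/
theorem regular_odd_gon_k_distance_set (k : ℕ) (hk : 1 ≤ k)
    (v : Fin (2 * k + 1) → EuclideanSpace ℝ (Fin 2))
    (hv : ∀ j, v j = ![Real.cos (2 * Real.pi * j / (2 * k + 1)),
                       Real.sin (2 * Real.pi * j / (2 * k + 1))]) :
    ({d : ℝ | ∃ i j : Fin (2 * k + 1), i ≠ j ∧ d = dist (v i) (v j)}).ncard = k :=
  regular_odd_gon_k_distance_set_general k v hv
end

section
/- The 5-cycle C₅ (equivalently, the vertex set of a regular pentagon with the two pentagon distances) cannot be 2-colored so that color 1 avoids the side length and color 2 avoids the diagonal length; hence χ̂^(1)(ℝ²) > 2 via a 1-distance-per-color restriction at distances equal to the side and diagonal of a regular pentagon. -/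
/-!
The sides of the pentagon join `vᵢ` to `vᵢ₊₁` and the diagonals join `vᵢ` to `vᵢ₊₂` (indices
mod 5), so both the side graph and the diagonal graph are 5-cycles. A colour class avoiding
one of the two distances is independent in a 5-cycle and thus has at most two points, so two
colour classes cannot cover all five vertices.
-/

open Real

noncomputable def regularPolygonVertex (n : ℕ) (i : Fin n) : EuclideanSpace ℝ (Fin 2) :=
  WithLp.toLp 2 ![cos (2 * π * i / n), sin (2 * π * i / n)]

theorem dist_toLp_cos_sin (a b : ℝ) :
    dist (WithLp.toLp 2 ![cos a, sin a] : EuclideanSpace ℝ (Fin 2))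
      (WithLp.toLp 2 ![cos b, sin b]) = √(2 - 2 * cos (a - b)) := by
  rw [EuclideanSpace.dist_eq, cos_sub]
  congr 1
  simp only [Fin.sum_univ_two, Real.dist_eq, sq_abs, Matrix.cons_val_zero, Matrix.cons_val_one]
  linear_combination sin_sq_add_cos_sq a + sin_sq_add_cos_sq b

theorem regularPolygonVertex_dist_add (n : ℕ) [NeZero n] (i k : Fin n) :
    dist (regularPolygonVertex n i) (regularPolygonVertex n (i + k)) =
      dist (regularPolygonVertex n 0) (regularPolygonVertex n k) := by
  simp only [regularPolygonVertex, dist_toLp_cos_sin, Fin.val_add, Fin.val_zero]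
  have hn : (n : ℝ) ≠ 0 := Nat.cast_ne_zero.2 (NeZero.ne n)
  have hmod : (((i + k : ℕ) % n : ℕ) : ℝ) = i + k - n * ((i + k : ℕ) / n : ℕ) := by
    rw [eq_sub_iff_add_eq, ← Nat.cast_mul, ← Nat.cast_add, Nat.mod_add_div]
    push_cast
    ring
  -- the two angle differences agree up to a whole number of turns
  have hangle : 2 * π * i / n - 2 * π * (((i + k : ℕ) % n : ℕ) : ℝ) / n =
      2 * π * ((0 : ℕ) : ℝ) / n - 2 * π * k / n - ((-((i + k : ℕ) / n : ℕ) : ℤ) : ℝ) * (2 * π) := by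
    rw [hmod, Int.cast_neg, Int.cast_natCast, Nat.cast_zero]
    field_simp
    ring
  rw [hangle, cos_sub_int_mul_two_pi]

theorem exists_monochromatic_side_or_diagonal (c : Fin 5 → Fin 2) :
    ∃ i, (c i = 0 ∧ c (i + 1) = 0) ∨ (c i = 1 ∧ c (i + 2) = 1) := by
  revert c
  decide

/-- The vertices of a regular pentagon cannot be 2-colored so that color 0 avoids
the side length and color 1 avoids the diagonal length; hence χ̂(ℝ²) > 2. -/
theorem pentagon_no_two_coloring
    (v : Fin 5 → EuclideanSpace ℝ (Fin 2))
    (hv : ∀ i, v i = ![Real.cos (2 * Real.pi * i / 5), Real.sin (2 * Real.pi * i / 5)])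
    (s t : ℝ) (hs : s = dist (v 0) (v 1)) (ht : t = dist (v 0) (v 2)) :
    ¬ ∃ c : Fin 5 → Fin 2,
      (∀ i j : Fin 5, i ≠ j → c i = 0 → c j = 0 → dist (v i) (v j) ≠ s) ∧
      (∀ i j : Fin 5, i ≠ j → c i = 1 → c j = 1 → dist (v i) (v j) ≠ t) := by
  rintro ⟨c, hside, hdiag⟩
  obtain rfl : v = regularPolygonVertex 5 :=
    funext fun i => by apply WithLp.ofLp_injective; simp [hv i, regularPolygonVertex]
  obtain ⟨i, ⟨hi, hi1⟩ | ⟨hi, hi2⟩⟩ := exists_monochromatic_side_or_diagonal c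
  · exact hside i (i + 1) (left_ne_add.2 (by decide)) hi hi1
      (by rw [hs, regularPolygonVertex_dist_add])
  · exact hdiag i (i + 2) (left_ne_add.2 (by decide)) hi hi2
      (by rw [ht, regularPolygonVertex_dist_add])
end
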